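/- For every fixed t ∈ [0,T], the continuation section C_t := {y ∈ (0,∞) : V(t,y) > G(t,y)} is an open subset of ℝ, and the stopping section D_t := {y ∈ (0,∞) : V(t,y) = G(t,y)} is closed in (0,∞). -/

import Mathlib

/-!
For fixed `t`, the expected reward of an admissible stopping time `τ` is affine in `y`: its
intercept `M P E[τ]` lies in `M P [t, T]`, and its slope `E[M Y (T - τ)]`, with `Y` the
lognormal factor of `Y_T^{t,y} = y Y`, is bounded by `|M| (T - t) E[Y] < ∞`. A supremum of affine
functions with uniformly bounded slopes is Lipschitz, so `V(t, ·)` is continuous, and `C_t` and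
`D_t` are a strict superlevel set and a level set of the continuous function `V(t, ·) - G(t, ·)`.
-/

open MeasureTheory ProbabilityTheory

/-- A standard Brownian motion with respect to the filtration `ℱ` under the probability
measure `Pr`: it starts at `0` a.s., has a.s. continuous paths, is adapted, and for
`0 ≤ u ≤ s` the increment `B s - B u` is independent of `ℱ u` and Gaussian with mean `0`
and variance `s - u`. -/
structure IsStandardBM {Ω : Type*} {mΩ : MeasurableSpace Ω}
    (Pr : Measure Ω) (ℱ : Filtration ℝ mΩ) (B : ℝ → Ω → ℝ) : Prop where
  zero : ∀ᵐ ω ∂Pr, B 0 ω = 0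
  cont : ∀ᵐ ω ∂Pr, Continuous fun s => B s ω
  adapted : Adapted ℱ B
  indep : ∀ u s : ℝ, 0 ≤ u → u ≤ s →
    Indep (MeasurableSpace.comap (fun ω => B s ω - B u ω) Real.measurableSpace) (ℱ u) Pr
  gauss : ∀ u s : ℝ, 0 ≤ u → u ≤ s →
    Pr.map (fun ω => B s ω - B u ω) = gaussianReal 0 (Real.toNNReal (s - u))

/-- `G t y`: the expected reward from stopping immediately at time `t` when the price is `y`. -/
noncomputable def G (M P μ T t y : ℝ) : ℝ :=
  M * P * t + M * y * Real.exp (μ * (T - t)) * (T - t)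

/-- `V t y`: the value function, the supremum of expected rewards `E[R^{t,y}(τ)]` over all
stopping times `τ` of the filtration `ℱ` with `t ≤ τ ≤ T` almost surely, where
`R^{t,y}(τ) = M·P·τ + M·Y_T^{t,y}·(T − τ)` and
`Y_T^{t,y} = y·exp((μ − σ²/2)(T − t) + σ(B_T − B_t))`. -/
noncomputable def V {Ω : Type*} {mΩ : MeasurableSpace Ω}
    (Pr : Measure Ω) (ℱ : Filtration ℝ mΩ) (B : ℝ → Ω → ℝ)
    (M P σ μ T t y : ℝ) : ℝ :=
  sSup {x : ℝ | ∃ τ : Ω → ℝ, IsStoppingTime ℱ (fun ω => (τ ω : WithTop ℝ)) ∧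
    (∀ᵐ ω ∂Pr, t ≤ τ ω ∧ τ ω ≤ T) ∧
    x = ∫ ω, (M * P * τ ω +
      M * (y * Real.exp ((μ - σ ^ 2 / 2) * (T - t) + σ * (B T ω - B t ω))) * (T - τ ω)) ∂Pr}

theorem lipschitzWith_sSup_image_affine {ι : Type*} {s : Set ι} {a b : ι → ℝ} {C : ℝ}
    (hs : s.Nonempty) (ha : BddAbove (a '' s)) (hb : ∀ i ∈ s, |b i| ≤ C) :
    LipschitzWith (Real.toNNReal C) fun y => sSup ((fun i => a i + y * b i) '' s) := by
  obtain ⟨A, hA⟩ := ha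
  have hbdd : ∀ y : ℝ, BddAbove ((fun i => a i + y * b i) '' s) := by
    refine fun y => ⟨A + |y| * C, ?_⟩
    rintro _ ⟨i, hi, rfl⟩
    have hai : a i ≤ A := hA ⟨i, hi, rfl⟩
    have hybi : y * b i ≤ |y| * C := calc
      y * b i ≤ |y| * |b i| := (le_abs_self _).trans (abs_mul _ _).le
      _ ≤ |y| * C := mul_le_mul_of_nonneg_left (hb i hi) (abs_nonneg y)
    linarith
  refine LipschitzWith.of_le_add_mul' C fun y y' => csSup_le (hs.image _) ?_
  rintro _ ⟨i, hi, rfl⟩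
  have hslope : (y - y') * b i ≤ C * dist y y' := calc
    (y - y') * b i ≤ |y - y'| * |b i| := (le_abs_self _).trans (abs_mul _ _).le
    _ ≤ |y - y'| * C := mul_le_mul_of_nonneg_left (hb i hi) (abs_nonneg _)
    _ = C * dist y y' := by rw [Real.dist_eq, mul_comm]
  have hmem : a i + y' * b i ≤ sSup ((fun i => a i + y' * b i) '' s) :=
    le_csSup (hbdd y') ⟨i, hi, rfl⟩
  linarith

section Reward

variable {Ω : Type*} {mΩ : MeasurableSpace Ω} {Pr : Measure Ω} {τ g : Ω → ℝ} {t T : ℝ}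

theorem integrable_of_ae_mem_Icc [IsFiniteMeasure Pr] (hτ : AEStronglyMeasurable τ Pr)
    (hτb : ∀ᵐ ω ∂Pr, t ≤ τ ω ∧ τ ω ≤ T) : Integrable τ Pr :=
  Integrable.of_bound hτ (max |t| |T|) (hτb.mono fun _ hω => abs_le_max_abs_abs hω.1 hω.2)

theorem integral_mem_Icc_of_ae_mem_Icc [IsProbabilityMeasure Pr]
    (hτ : AEStronglyMeasurable τ Pr) (hτb : ∀ᵐ ω ∂Pr, t ≤ τ ω ∧ τ ω ≤ T) :
    ∫ ω, τ ω ∂Pr ∈ Set.Icc t T := by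
  have hτint := integrable_of_ae_mem_Icc hτ hτb
  constructor
  · simpa using integral_mono_ae (integrable_const t) hτint (hτb.mono fun _ hω => hω.1)
  · simpa using integral_mono_ae hτint (integrable_const T) (hτb.mono fun _ hω => hω.2)

theorem integral_reward_eq [IsFiniteMeasure Pr] (hτ : AEStronglyMeasurable τ Pr)
    (hτb : ∀ᵐ ω ∂Pr, t ≤ τ ω ∧ τ ω ≤ T) (hg : Integrable g Pr) (c m y : ℝ) :
    ∫ ω, (c * τ ω + m * (y * g ω) * (T - τ ω)) ∂Pr
      = c * ∫ ω, τ ω ∂Pr + y * ∫ ω, m * g ω * (T - τ ω) ∂Pr := by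
  have hτint := integrable_of_ae_mem_Icc hτ hτb
  have hgτint : Integrable (fun ω => m * g ω * (T - τ ω)) Pr := by
    refine (hg.const_mul m).mul_bdd (aestronglyMeasurable_const.sub hτ) (c := T - t) ?_
    filter_upwards [hτb] with ω hω
    exact abs_le.mpr ⟨by linarith [hω.2], by linarith [hω.1]⟩
  calc ∫ ω, (c * τ ω + m * (y * g ω) * (T - τ ω)) ∂Pr
      = ∫ ω, (c * τ ω + y * (m * g ω * (T - τ ω))) ∂Pr := by congr 1; ext ω; ring
    _ = _ := by
      rw [integral_add (hτint.const_mul c) (hgτint.const_mul y), integral_const_mul,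
        integral_const_mul]

theorem abs_integral_mul_sub_le (hτb : ∀ᵐ ω ∂Pr, t ≤ τ ω ∧ τ ω ≤ T) (hg : Integrable g Pr)
    (hg0 : 0 ≤ g) (m : ℝ) :
    |∫ ω, m * g ω * (T - τ ω) ∂Pr| ≤ |m| * (T - t) * ∫ ω, g ω ∂Pr := by
  rw [← integral_const_mul, ← Real.norm_eq_abs]
  refine norm_integral_le_of_norm_le (hg.const_mul _) ?_
  filter_upwards [hτb] with ω hω
  have hτ' : |T - τ ω| ≤ T - t := abs_le.mpr ⟨by linarith [hω.2], by linarith [hω.1]⟩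
  rw [Real.norm_eq_abs, abs_mul, abs_mul, abs_of_nonneg (hg0 ω)]
  calc |m| * g ω * |T - τ ω| ≤ |m| * g ω * (T - t) :=
        mul_le_mul_of_nonneg_left hτ' (mul_nonneg (abs_nonneg m) (hg0 ω))
    _ = |m| * (T - t) * g ω := by ring

end Reward

section BlackScholes

variable {Ω : Type*} {mΩ : MeasurableSpace Ω} {Pr : Measure Ω} {ℱ : Filtration ℝ mΩ}
  {B : ℝ → Ω → ℝ}

theorem IsStandardBM.integrable_exp_increment (hB : IsStandardBM Pr ℱ B) {u s : ℝ}
    (hu : 0 ≤ u) (hus : u ≤ s) (a c : ℝ) :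
    Integrable (fun ω => Real.exp (a + c * (B s ω - B u ω))) Pr := by
  have hmeas : ∀ r, Measurable (B r) := fun r => (hB.adapted r).mono (ℱ.le r) le_rfl
  have hexp : Integrable (fun x => Real.exp (a + c * x)) (Pr.map fun ω => B s ω - B u ω) := by
    simp_rw [hB.gauss u s hu hus, Real.exp_add]
    exact (integrable_exp_mul_gaussianReal c).const_mul _
  exact hexp.comp_measurable ((hmeas s).sub (hmeas u))

variable (Pr ℱ) in
def admissibleTimes (t T : ℝ) : Set (Ω → ℝ) :=
  {τ | IsStoppingTime ℱ (fun ω => (τ ω : WithTop ℝ)) ∧ ∀ᵐ ω ∂Pr, t ≤ τ ω ∧ τ ω ≤ T}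

theorem measurable_of_mem_admissibleTimes {τ : Ω → ℝ} {t T : ℝ}
    (hτ : τ ∈ admissibleTimes Pr ℱ t T) : Measurable τ :=
  (hτ.1.measurable.mono hτ.1.measurableSpace_le le_rfl).untopD 0

theorem V_eq_sSup_image [IsProbabilityMeasure Pr] {M P σ μ T t : ℝ}
    (hg : Integrable (fun ω => Real.exp ((μ - σ ^ 2 / 2) * (T - t) + σ * (B T ω - B t ω))) Pr)
    (y : ℝ) :
    V Pr ℱ B M P σ μ T t y = sSup ((fun τ => M * P * ∫ ω, τ ω ∂Pr + y * ∫ ω,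
      M * Real.exp ((μ - σ ^ 2 / 2) * (T - t) + σ * (B T ω - B t ω)) * (T - τ ω) ∂Pr) ''
        admissibleTimes Pr ℱ t T) := by
  unfold V
  congr 1
  ext x
  constructor
  · rintro ⟨τ, hst, hτb, rfl⟩
    exact ⟨τ, ⟨hst, hτb⟩, (integral_reward_eq
      (measurable_of_mem_admissibleTimes ⟨hst, hτb⟩).aestronglyMeasurable hτb hg _ _ _).symm⟩
  · rintro ⟨τ, hτ, rfl⟩
    exact ⟨τ, hτ.1, hτ.2, (integral_reward_eq
      (measurable_of_mem_admissibleTimes hτ).aestronglyMeasurable hτ.2 hg _ _ _).symm⟩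

theorem IsStandardBM.lipschitzWith_V [IsProbabilityMeasure Pr] (hB : IsStandardBM Pr ℱ B)
    {M P σ μ T t : ℝ} (ht : t ∈ Set.Icc 0 T) :
    ∃ K, LipschitzWith K (V Pr ℱ B M P σ μ T t) := by
  set g : Ω → ℝ := fun ω => Real.exp ((μ - σ ^ 2 / 2) * (T - t) + σ * (B T ω - B t ω))
  have hg : Integrable g Pr := hB.integrable_exp_increment ht.1 ht.2 _ σ
  have hconst : (fun _ => t) ∈ admissibleTimes Pr ℱ t T :=
    ⟨isStoppingTime_const ℱ t, ae_of_all _ fun _ => ⟨le_rfl, ht.2⟩⟩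
  have hintercept :
      BddAbove ((fun τ : Ω → ℝ => M * P * ∫ ω, τ ω ∂Pr) '' admissibleTimes Pr ℱ t T) := by
    refine ((isCompact_Icc (a := t) (b := T)).image
      (continuous_const_mul (M * P))).bddAbove.mono ?_
    rintro _ ⟨τ, hτ, rfl⟩
    exact ⟨_, integral_mem_Icc_of_ae_mem_Icc
      (measurable_of_mem_admissibleTimes hτ).aestronglyMeasurable hτ.2, rfl⟩
  have hslope : ∀ τ ∈ admissibleTimes Pr ℱ t T,
      |∫ ω, M * g ω * (T - τ ω) ∂Pr| ≤ |M| * (T - t) * ∫ ω, g ω ∂Pr :=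
    fun τ hτ => abs_integral_mul_sub_le hτ.2 hg (fun _ => (Real.exp_pos _).le) M
  exact ⟨_, funext (V_eq_sSup_image hg) ▸
    lipschitzWith_sSup_image_affine ⟨_, hconst⟩ hintercept hslope⟩

end BlackScholes

theorem stmt_12 {Ω : Type*} {mΩ : MeasurableSpace Ω}
    (Pr : Measure Ω) [IsProbabilityMeasure Pr] (ℱ : Filtration ℝ mΩ) (B : ℝ → Ω → ℝ)
    (hB : IsStandardBM Pr ℱ B)
    (T M P σ μ : ℝ)
    (t : ℝ) (ht : t ∈ Set.Icc 0 T) :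
    IsOpen {y : ℝ | y ∈ Set.Ioi (0 : ℝ) ∧ G M P μ T t y < V Pr ℱ B M P σ μ T t y} ∧
    IsClosed {y : Set.Ioi (0 : ℝ) | V Pr ℱ B M P σ μ T t ↑y = G M P μ T t ↑y} := by
  obtain ⟨K, hK⟩ := hB.lipschitzWith_V (M := M) (P := P) (σ := σ) (μ := μ) ht
  have hG : Continuous (G M P μ T t) := by unfold G; fun_prop
  exact ⟨isOpen_Ioi.inter (isOpen_lt hG hK.continuous),
    isClosed_eq (hK.continuous.comp continuous_subtype_val) (hG.comp continuous_subtype_val)⟩
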